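/- The extended occupancy mass function satisfies the recursion Occ(k|n+1, m, θ) = θ·((m−k+1)/m)·Occ(k−1|n, m, θ) + (1 − θ·(m−k)/m)·Occ(k|n, m, θ). -/

import Mathlib

open Finset

/-- Extended occupancy mass function, with the convention `Occ (-1) n m θ = 0`. -/
noncomputable def Occ (k : ℤ) (n m : ℕ) (θ : ℝ) : ℝ :=
  if k < 0 then 0 else
    (Nat.choose m k.toNat : ℝ) *
      ∑ i ∈ Finset.range (k.toNat + 1),
        (Nat.choose k.toNat i : ℝ) * (-1) ^ (k.toNat - i) * (1 - θ * ((m : ℝ) - i) / m) ^ n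

/-! The bases `aᵢ = 1 - θ(m - i)/m` form an arithmetic progression with step `d = θ/m`,
so `aᵢ^(n+1) = a_k · aᵢ^n - d(k - i) · aᵢ^n`. Summing against `(-1)^(k-i) C(k, i)`, the second
term collapses via `C(k, i)(k - i) = k C(k-1, i)` to the same alternating sum one level down, and
`C(m, k) k = C(m, k-1)(m - k + 1)` turns the result into the recursion for `Occ`. -/

section AlternatingPowerSum

variable {R : Type*} [CommRing R]

/-- The `k`-th forward difference at `0` of `i ↦ (a i)^n`. -/
def altPowSum (a : ℕ → R) (k n : ℕ) : R :=
  ∑ i ∈ range (k + 1), (k.choose i : R) * (-1) ^ (k - i) * a i ^ n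

theorem altPowSum_zero_left (a : ℕ → R) (n : ℕ) : altPowSum a 0 n = a 0 ^ n := by
  simp [altPowSum]

theorem sum_choose_mul_neg_one_pow_mul_sub (f : ℕ → R) (k : ℕ) :
    ∑ i ∈ range (k + 1 + 1), ((k + 1).choose i : R) * (-1) ^ (k + 1 - i) * ((k : R) + 1 - i) * f i
      = -((k : R) + 1) * ∑ i ∈ range (k + 1), (k.choose i : R) * (-1) ^ (k - i) * f i := by
  rw [sum_range_succ, Nat.cast_succ, sub_self, mul_zero, zero_mul, add_zero, mul_sum]
  refine sum_congr rfl fun i hi => ?_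
  have hik : i ≤ k := Nat.lt_succ_iff.mp (mem_range.mp hi)
  have hchoose := congrArg (Nat.cast : ℕ → R) (Nat.choose_mul_succ_eq k i)
  push_cast [Nat.cast_sub (by omega : i ≤ k + 1)] at hchoose
  rw [Nat.sub_add_comm hik, pow_succ]
  linear_combination ((-1 : R) ^ (k - i) * f i) * hchoose

theorem altPowSum_succ_succ {a : ℕ → R} {d : R} (ha : ∀ i, a i = a 0 + d * i) (k n : ℕ) :
    altPowSum a (k + 1) (n + 1)
      = a (k + 1) * altPowSum a (k + 1) n + d * ((k : R) + 1) * altPowSum a k n := by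
  have hsplit : ∀ i, a i ^ (n + 1) = a (k + 1) * a i ^ n - d * ((k : R) + 1 - i) * a i ^ n := by
    intro i
    rw [pow_succ, ha i, ha (k + 1)]
    push_cast
    ring
  have hsum : altPowSum a (k + 1) (n + 1) = a (k + 1) * altPowSum a (k + 1) n
      - d * ∑ i ∈ range (k + 1 + 1),
          ((k + 1).choose i : R) * (-1) ^ (k + 1 - i) * ((k : R) + 1 - i) * a i ^ n := by
    simp only [altPowSum, mul_sum, ← sum_sub_distrib]
    exact sum_congr rfl fun i _ => by rw [hsplit]; ring
  rw [hsum, sum_choose_mul_neg_one_pow_mul_sub (fun i => a i ^ n)]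
  unfold altPowSum
  ring

end AlternatingPowerSum

theorem Nat.cast_choose_succ_mul {R : Type*} [CommRing R] (m k : ℕ) :
    (m.choose (k + 1) : R) * ((k : R) + 1) = m.choose k * ((m : R) - k) := by
  rcases le_or_gt k m with hkm | hmk
  · have h := congrArg (Nat.cast : ℕ → R) (Nat.choose_succ_right_eq m k)
    push_cast [Nat.cast_sub hkm] at h
    exact h
  · simp [Nat.choose_eq_zero_of_lt hmk, Nat.choose_eq_zero_of_lt (hmk.trans (Nat.lt_succ_self k))]

theorem Occ_natCast (k n m : ℕ) (θ : ℝ) :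
    Occ k n m θ = m.choose k * altPowSum (fun i => 1 - θ * ((m : ℝ) - i) / m) k n := by
  simp [Occ, altPowSum]

theorem Occ_neg_one (n m : ℕ) (θ : ℝ) : Occ (-1) n m θ = 0 := by
  simp [Occ]

theorem occupancy_recursion_general (n m k : ℕ) (θ : ℝ) :
    Occ (k : ℤ) (n + 1) m θ =
      θ * (((m : ℝ) - k + 1) / m) * Occ ((k : ℤ) - 1) n m θ +
        (1 - θ * ((m : ℝ) - k) / m) * Occ (k : ℤ) n m θ := by
  set a : ℕ → ℝ := fun i => 1 - θ * ((m : ℝ) - i) / m with ha_def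
  have ha : ∀ i, a i = a 0 + θ / m * i := fun i => by simp only [ha_def]; ring
  cases k with
  | zero =>
    rw [Occ_natCast, Occ_natCast, altPowSum_zero_left, altPowSum_zero_left]
    simp only [Nat.cast_zero, zero_sub, Occ_neg_one]
    ring
  | succ k =>
    have hpred : ((k + 1 : ℕ) : ℤ) - 1 = (k : ℤ) := by push_cast; ring
    rw [hpred, Occ_natCast, Occ_natCast, Occ_natCast, ← ha_def, altPowSum_succ_succ ha]
    push_cast [ha_def]
    linear_combination (θ / m * altPowSum a k n) * Nat.cast_choose_succ_mul (R := ℝ) m k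

theorem occupancy_recursion (n m k : ℕ) (hm : 0 < m) (hk : k ≤ m) (θ : ℝ)
    (hθ0 : 0 < θ) (hθ1 : θ ≤ 1) :
    Occ (k : ℤ) (n + 1) m θ =
      θ * (((m : ℝ) - k + 1) / m) * Occ ((k : ℤ) - 1) n m θ +
        (1 - θ * ((m : ℝ) - k) / m) * Occ (k : ℤ) n m θ :=
  occupancy_recursion_general n m k θ
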